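/- Fix n ∈ ℤ odd, β : ℤ → ℂ, m² > 0, and suppose g : ℤ → ℂ is finitely supported with (Δ_n + m²)g(k) = 0 for all k with n + 2k < 0, where Δ_n is the Jacobi operator (Δ_n g)(k) = (|β(k+n)|² + |β(-k)|²)g(k) - conj(β(k+n))β(-k-1)g(k+1) - β(k+n-1)conj(β(-k))g(k-1). Set f = (Δ_n + m²)g. Then ∑_{k∈ℤ} conj(f(-k-n))·g(k) = Σ₁ + Σ₂ ≥ 0, where Σ₁ = ∑_{n+2k<0}|β(k+n)g(k) - β(-k-1)g(k+1)|² + m²∑_{n+2k<0}|g(k)|² and Σ₂ = ∑_{n+2k<0}|β(-k)g(k) - β(k+n-1)g(k-1)|² + m²∑_{n+2k<0}|g(k)|². -/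
import Mathlib


open scoped ComplexConjugate

noncomputable section

/-- The Jacobi-type operator `Δ_n` of the covariant Laplacian. -/
def DeltaN (n : ℤ) (β : ℤ → ℂ) (g : ℤ → ℂ) : ℤ → ℂ := fun k =>
  ((‖β (k + n)‖ ^ 2 + ‖β (-k)‖ ^ 2 : ℝ) : ℂ) * g k
    - conj (β (k + n)) * β (-k - 1) * g (k + 1)
    - β (k + n - 1) * conj (β (-k)) * g (k - 1)

private lemma hsq_aux (z : ℂ) : ((‖z‖ : ℝ) : ℂ) ^ 2 = conj z * z := by
  rw [← Complex.mul_conj']; ring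

private lemma hsq_aux' (z : ℂ) : ((‖z‖ ^ 2 : ℝ) : ℂ) = conj z * z := by
  push_cast; exact hsq_aux z

private lemma sum_Icc_telescope (Ψ : ℤ → ℂ) (a : ℤ) :
    ∀ N : ℕ, ∑ k ∈ Finset.Icc a (a + (N : ℤ)), (Ψ k - Ψ (k - 1)) = Ψ (a + (N : ℤ)) - Ψ (a - 1) := by
  intro N
  induction N with
  | zero => simp
  | succ n ih =>
      have h1 : (a + ((n + 1 : ℕ) : ℤ)) = a + (n : ℤ) + 1 := by push_cast; ring
      rw [h1]
      have hins : Finset.Icc a (a + (n : ℤ) + 1) = insert (a + (n : ℤ) + 1) (Finset.Icc a (a + (n : ℤ))) := by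
        ext x; simp only [Finset.mem_Icc, Finset.mem_insert]; omega
      have hnm : (a + (n : ℤ) + 1) ∉ Finset.Icc a (a + (n : ℤ)) := by
        simp only [Finset.mem_Icc]; omega
      rw [hins, Finset.sum_insert hnm, ih,
        show a + (n : ℤ) + 1 - 1 = a + (n : ℤ) by ring]
      ring

private lemma tsum_eq_boundary (Φ Ψ : ℤ → ℂ) (K : ℤ) (s : Finset ℤ)
    (hstep : ∀ k, k ≤ K → Φ k = Ψ k - Ψ (k - 1))
    (htop : ∀ k, K < k → Φ k = 0)
    (hΨ : ∀ k, k ∉ s → Ψ k = 0) : ∑' k, Φ k = Ψ K := by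
  classical
  have hne : (insert K s).Nonempty := ⟨K, Finset.mem_insert_self _ _⟩
  set M := (insert K s).min' hne with hMdef
  have hMK : M ≤ K := Finset.min'_le _ _ (Finset.mem_insert_self _ _)
  have hΨlow : ∀ k, k < M → Ψ k = 0 := by
    intro k hk
    refine hΨ k (fun hks => ?_)
    have := Finset.min'_le (insert K s) k (Finset.mem_insert_of_mem hks)
    omega
  have hvan : ∀ k, k ∉ Finset.Icc M K → Φ k = 0 := by
    intro k hk
    rcases lt_or_ge K k with h | h
    · exact htop k h
    · have hkM : k < M := by
        by_contra hcon
        exact hk (Finset.mem_Icc.mpr ⟨by omega, h⟩)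
      rw [hstep k h, hΨlow k hkM, hΨlow (k - 1) (by omega), sub_zero]
  rw [tsum_eq_sum hvan,
    Finset.sum_congr rfl (fun x hx => hstep x (Finset.mem_Icc.mp hx).2)]
  obtain ⟨N, hN⟩ : ∃ N : ℕ, K = M + (N : ℤ) := ⟨(K - M).toNat, by omega⟩
  rw [hN, sum_Icc_telescope, hΨlow (M - 1) (by omega), sub_zero]

/-- Boundary potential for the LHS (Green's identity). -/
private def psi1 (n : ℤ) (β g : ℤ → ℂ) : ℤ → ℂ := fun j =>
  conj (β (j + n)) * β (-j - 1) * conj (g (-j - n)) * g (j + 1)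
    - β (j + n) * conj (β (-j - 1)) * conj (g (-j - n - 1)) * g j

/-- Boundary potential for `Σ₂`. -/
private def psi3 (n : ℤ) (β g : ℤ → ℂ) : ℤ → ℂ := fun j =>
  -(conj (β (j + n)) * conj (g j) * (β (j + n) * g j - β (-j - 1) * g (j + 1)))

/-- Boundary potential for `Σ₁`. -/
private def psi4 (n : ℤ) (β g : ℤ → ℂ) : ℤ → ℂ := fun j =>
  -(conj (β (-j - 1)) * conj (g (j + 1)) * (β (j + n) * g j - β (-j - 1) * g (j + 1)))

private lemma stepA (n : ℤ) (β g f : ℤ → ℂ) (m2 : ℝ)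
    (hf : ∀ k : ℤ, f k = DeltaN n β g k + (m2 : ℂ) * g k)
    (k : ℤ) (hzk : f k = 0) :
    conj (f (-k - n)) * g k = psi1 n β g k - psi1 n β g (k - 1) := by
  have hfk : DeltaN n β g k + (m2 : ℂ) * g k = 0 := by rw [← hf]; exact hzk
  have hθ := hf (-k - n)
  simp only [DeltaN] at hθ hfk
  rw [show -k - n + n = -k by ring, show -(-k - n) = k + n by ring,
    show -k - n + 1 = -(k - 1) - n by ring] at hθ
  push_cast at hθ hfk
  simp only [hsq_aux] at hθ hfk
  rw [hθ]
  simp only [psi1,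
    show k - 1 + n = k + n - 1 by ring, show -(k - 1) - 1 = -k by ring,
    show k - 1 + 1 = k by ring, show -(k - 1) - n - 1 = -k - n by ring]
  simp only [map_add, map_sub, map_mul, Complex.conj_conj, Complex.conj_ofReal]
  linear_combination conj (g (-k - n)) * hfk

private lemma stepB (n : ℤ) (β g f : ℤ → ℂ) (m2 : ℝ)
    (hf : ∀ k : ℤ, f k = DeltaN n β g k + (m2 : ℂ) * g k)
    (k : ℤ) (hzk : f k = 0) :
    conj (β (-k) * g k - β (k + n - 1) * g (k - 1)) * (β (-k) * g k - β (k + n - 1) * g (k - 1))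
      + (m2 : ℂ) * (conj (g k) * g k) = psi3 n β g k - psi3 n β g (k - 1) := by
  have hfk : DeltaN n β g k + (m2 : ℂ) * g k = 0 := by rw [← hf]; exact hzk
  simp only [DeltaN] at hfk
  push_cast at hfk
  simp only [hsq_aux] at hfk
  simp only [psi3,
    show k - 1 + n = k + n - 1 by ring, show -(k - 1) - 1 = -k by ring,
    show k - 1 + 1 = k by ring]
  simp only [map_add, map_sub, map_mul, Complex.conj_conj, Complex.conj_ofReal]
  linear_combination conj (g k) * hfk

private lemma stepC (n : ℤ) (β g f : ℤ → ℂ) (m2 : ℝ)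
    (hf : ∀ k : ℤ, f k = DeltaN n β g k + (m2 : ℂ) * g k)
    (k : ℤ) (hzk : f k = 0) :
    conj (β (k + n) * g k - β (-k - 1) * g (k + 1)) * (β (k + n) * g k - β (-k - 1) * g (k + 1))
      + (m2 : ℂ) * (conj (g k) * g k) = psi4 n β g k - psi4 n β g (k - 1) := by
  have hfk : DeltaN n β g k + (m2 : ℂ) * g k = 0 := by rw [← hf]; exact hzk
  simp only [DeltaN] at hfk
  push_cast at hfk
  simp only [hsq_aux] at hfk
  simp only [psi4,
    show k - 1 + n = k + n - 1 by ring, show -(k - 1) - 1 = -k by ring,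
    show k - 1 + 1 = k by ring]
  simp only [map_add, map_sub, map_mul, Complex.conj_conj, Complex.conj_ofReal]
  linear_combination conj (g k) * hfk

/-- reflection positivity identity, odd case. With
`f = (Δ_n + m²)g` vanishing on `{n+2k < 0}`, `∑ conj(f(-k-n)) g(k) = Σ₁ + Σ₂ ≥ 0`. -/
theorem reflection_positivity_odd (n : ℤ) (hn : Odd n) (β : ℤ → ℂ)
    (m2 : ℝ) (hm2 : 0 < m2) (g : ℤ →₀ ℂ)
    (f : ℤ → ℂ) (hf : ∀ k : ℤ, f k = DeltaN n β (⇑g) k + (m2 : ℂ) * g k)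
    (hzero : ∀ k : ℤ, n + 2 * k < 0 → f k = 0) :
    (∑' k : ℤ, conj (f (-k - n)) * g k) =
      ((((∑' k : ℤ, if n + 2 * k < 0 then
              ‖β (k + n) * g k - β (-k - 1) * g (k + 1)‖ ^ 2 else 0)
            + m2 * ∑' k : ℤ, if n + 2 * k < 0 then ‖g k‖ ^ 2 else 0)
        + ((∑' k : ℤ, if n + 2 * k < 0 then
              ‖β (-k) * g k - β (k + n - 1) * g (k - 1)‖ ^ 2 else 0)
            + m2 * ∑' k : ℤ, if n + 2 * k < 0 then ‖g k‖ ^ 2 else 0) : ℝ) : ℂ) ∧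
    0 ≤ (((∑' k : ℤ, if n + 2 * k < 0 then
              ‖β (k + n) * g k - β (-k - 1) * g (k + 1)‖ ^ 2 else 0)
            + m2 * ∑' k : ℤ, if n + 2 * k < 0 then ‖g k‖ ^ 2 else 0)
        + ((∑' k : ℤ, if n + 2 * k < 0 then
              ‖β (-k) * g k - β (k + n - 1) * g (k - 1)‖ ^ 2 else 0)
            + m2 * ∑' k : ℤ, if n + 2 * k < 0 then ‖g k‖ ^ 2 else 0) : ℝ) := by
  classical
  obtain ⟨c, hc⟩ := hn
  constructor
  · -- the identity
    -- finite-support facts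
    have hg0 : ∀ k : ℤ, k ∉ g.support → g k = 0 := fun k hk => Finsupp.notMem_support_iff.mp hk
    -- support finsets
    set s1 : Finset ℤ := g.support ∪ g.support.image (fun x => x - 1) with hs1
    have hg1 : ∀ k : ℤ, k ∉ s1 → g k = 0 ∧ g (k + 1) = 0 := by
      intro k hk
      rw [hs1, Finset.mem_union] at hk
      push_neg at hk
      refine ⟨hg0 k hk.1, ?_⟩
      by_contra hgk
      exact hk.2 (Finset.mem_image.mpr ⟨k + 1, Finsupp.mem_support_iff.mpr hgk, by ring⟩)
    set s2 : Finset ℤ := g.support ∪ g.support.image (fun x => x + 1) with hs2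
    have hg2 : ∀ k : ℤ, k ∉ s2 → g k = 0 ∧ g (k - 1) = 0 := by
      intro k hk
      rw [hs2, Finset.mem_union] at hk
      push_neg at hk
      refine ⟨hg0 k hk.1, ?_⟩
      by_contra hgk
      exact hk.2 (Finset.mem_image.mpr ⟨k - 1, Finsupp.mem_support_iff.mpr hgk, by ring⟩)
    -- key telescoped identities
    have h1 : (∑' k : ℤ, conj (f (-k - n)) * g k) = psi1 n β g (-c - 1) := by
      refine tsum_eq_boundary _ _ (-c - 1) s1 ?_ ?_ ?_
      · intro k hk
        exact stepA n β g f m2 hf k (hzero k (by omega))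
      · intro k hk
        rw [hzero (-k - n) (by omega)]
        simp
      · intro j hj
        obtain ⟨e0, e1⟩ := hg1 j hj
        simp [psi1, e0, e1]
    have h4 : (∑' k : ℤ, (if n + 2 * k < 0 then
          conj (β (k + n) * g k - β (-k - 1) * g (k + 1)) * (β (k + n) * g k - β (-k - 1) * g (k + 1))
            + (m2 : ℂ) * (conj (g k) * g k) else 0)) = psi4 n β g (-c - 1) := by
      refine tsum_eq_boundary _ _ (-c - 1) s1 ?_ ?_ ?_
      · intro k hk
        rw [if_pos (by omega)]
        exact stepC n β g f m2 hf k (hzero k (by omega))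
      · intro k hk
        rw [if_neg (by omega)]
      · intro j hj
        obtain ⟨e0, e1⟩ := hg1 j hj
        simp [psi4, e0, e1]
    have h3 : (∑' k : ℤ, (if n + 2 * k < 0 then
          conj (β (-k) * g k - β (k + n - 1) * g (k - 1)) * (β (-k) * g k - β (k + n - 1) * g (k - 1))
            + (m2 : ℂ) * (conj (g k) * g k) else 0)) = psi3 n β g (-c - 1) := by
      refine tsum_eq_boundary _ _ (-c - 1) g.support ?_ ?_ ?_
      · intro k hk
        rw [if_pos (by omega)]
        exact stepB n β g f m2 hf k (hzero k (by omega))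
      · intro k hk
        rw [if_neg (by omega)]
      · intro j hj
        simp [psi3, hg0 j hj]
    -- cast identities
    have hsummA : Summable (fun k : ℤ => if n + 2 * k < 0 then
        conj (β (k + n) * g k - β (-k - 1) * g (k + 1)) * (β (k + n) * g k - β (-k - 1) * g (k + 1)) else 0) := by
      refine summable_of_ne_finset_zero (s := s1) (fun k hk => ?_)
      obtain ⟨e0, e1⟩ := hg1 k hk
      simp [e0, e1]
    have hsummB : Summable (fun k : ℤ => if n + 2 * k < 0 then
        conj (β (-k) * g k - β (k + n - 1) * g (k - 1)) * (β (-k) * g k - β (k + n - 1) * g (k - 1)) else 0) := by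
      refine summable_of_ne_finset_zero (s := s2) (fun k hk => ?_)
      obtain ⟨e0, e1⟩ := hg2 k hk
      simp [e0, e1]
    have hsummg : Summable (fun k : ℤ => (m2 : ℂ) * (if n + 2 * k < 0 then conj (g k) * g k else 0)) := by
      refine summable_of_ne_finset_zero (s := g.support) (fun k hk => ?_)
      simp [hg0 k hk]
    have hcast1 : (((∑' k : ℤ, if n + 2 * k < 0 then
            ‖β (k + n) * g k - β (-k - 1) * g (k + 1)‖ ^ 2 else 0)
          + m2 * ∑' k : ℤ, if n + 2 * k < 0 then ‖g k‖ ^ 2 else 0 : ℝ) : ℂ)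
        = ∑' k : ℤ, (if n + 2 * k < 0 then
            conj (β (k + n) * g k - β (-k - 1) * g (k + 1)) * (β (k + n) * g k - β (-k - 1) * g (k + 1))
              + (m2 : ℂ) * (conj (g k) * g k) else 0) := by
      have e1 : ∀ k : ℤ, (Complex.ofReal (if n + 2 * k < 0 then
            ‖β (k + n) * g k - β (-k - 1) * g (k + 1)‖ ^ 2 else 0))
          = (if n + 2 * k < 0 then
            conj (β (k + n) * g k - β (-k - 1) * g (k + 1)) * (β (k + n) * g k - β (-k - 1) * g (k + 1)) else 0) := by
        intro k; rw [apply_ite Complex.ofReal]; split_ifs with h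
        · exact hsq_aux' _
        · simp
      have e2 : ∀ k : ℤ, (m2 : ℂ) * (Complex.ofReal (if n + 2 * k < 0 then ‖g k‖ ^ 2 else 0))
          = (m2 : ℂ) * (if n + 2 * k < 0 then conj (g k) * g k else 0) := by
        intro k; rw [apply_ite Complex.ofReal]; split_ifs with h
        · rw [hsq_aux']
        · simp
      rw [Complex.ofReal_add, Complex.ofReal_mul, Complex.ofReal_tsum, Complex.ofReal_tsum,
        ← tsum_mul_left, tsum_congr e1, tsum_congr e2, ← Summable.tsum_add hsummA hsummg]
      refine tsum_congr (fun k => ?_)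
      split_ifs with h <;> simp
    have hcast2 : (((∑' k : ℤ, if n + 2 * k < 0 then
            ‖β (-k) * g k - β (k + n - 1) * g (k - 1)‖ ^ 2 else 0)
          + m2 * ∑' k : ℤ, if n + 2 * k < 0 then ‖g k‖ ^ 2 else 0 : ℝ) : ℂ)
        = ∑' k : ℤ, (if n + 2 * k < 0 then
            conj (β (-k) * g k - β (k + n - 1) * g (k - 1)) * (β (-k) * g k - β (k + n - 1) * g (k - 1))
              + (m2 : ℂ) * (conj (g k) * g k) else 0) := by
      have e1 : ∀ k : ℤ, (Complex.ofReal (if n + 2 * k < 0 then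
            ‖β (-k) * g k - β (k + n - 1) * g (k - 1)‖ ^ 2 else 0))
          = (if n + 2 * k < 0 then
            conj (β (-k) * g k - β (k + n - 1) * g (k - 1)) * (β (-k) * g k - β (k + n - 1) * g (k - 1)) else 0) := by
        intro k; rw [apply_ite Complex.ofReal]; split_ifs with h
        · exact hsq_aux' _
        · simp
      have e2 : ∀ k : ℤ, (m2 : ℂ) * (Complex.ofReal (if n + 2 * k < 0 then ‖g k‖ ^ 2 else 0))
          = (m2 : ℂ) * (if n + 2 * k < 0 then conj (g k) * g k else 0) := by
        intro k; rw [apply_ite Complex.ofReal]; split_ifs with h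
        · rw [hsq_aux']
        · simp
      rw [Complex.ofReal_add, Complex.ofReal_mul, Complex.ofReal_tsum, Complex.ofReal_tsum,
        ← tsum_mul_left, tsum_congr e1, tsum_congr e2, ← Summable.tsum_add hsummB hsummg]
      refine tsum_congr (fun k => ?_)
      split_ifs with h <;> simp
    -- reality of psi3 boundary value
    have hreal : conj (psi3 n β g (-c - 1)) = psi3 n β g (-c - 1) := by
      rw [← h3, ← hcast2, Complex.conj_ofReal]
    -- index-normalize boundary values
    have hb1 : psi1 n β g (-c - 1) =
        conj (β c) * β c * conj (g (-c)) * g (-c) - β c * conj (β c) * conj (g (-c - 1)) * g (-c - 1) := by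
      simp only [psi1]
      rw [show -c - 1 + n = c by omega, show -(-c - 1) - 1 = c by omega,
        show -(-c - 1) - n = -c by omega, show -c - 1 + 1 = -c by omega]
    have hb3 : psi3 n β g (-c - 1) =
        -(conj (β c) * conj (g (-c - 1)) * (β c * g (-c - 1) - β c * g (-c))) := by
      simp only [psi3]
      rw [show -c - 1 + n = c by omega, show -(-c - 1) - 1 = c by omega,
        show -c - 1 + 1 = -c by omega]
    have hb4 : psi4 n β g (-c - 1) =
        -(conj (β c) * conj (g (-c)) * (β c * g (-c - 1) - β c * g (-c))) := by
      simp only [psi4]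
      rw [show -c - 1 + n = c by omega, show -(-c - 1) - 1 = c by omega,
        show -c - 1 + 1 = -c by omega]
    -- the bridge
    have hbridge : psi1 n β g (-c - 1) = psi4 n β g (-c - 1) + psi3 n β g (-c - 1) := by
      rw [hb3] at hreal
      simp only [map_neg, map_sub, map_mul, Complex.conj_conj] at hreal
      rw [hb1, hb3, hb4]
      linear_combination hreal
    rw [h1, hbridge, Complex.ofReal_add, hcast1, hcast2, h4, h3]
  · -- nonnegativity
    have t1 : 0 ≤ (∑' k : ℤ, if n + 2 * k < 0 then
        ‖β (k + n) * g k - β (-k - 1) * g (k + 1)‖ ^ 2 else (0:ℝ)) :=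
      tsum_nonneg (fun k => by split <;> positivity)
    have t2 : 0 ≤ (∑' k : ℤ, if n + 2 * k < 0 then ‖g k‖ ^ 2 else (0:ℝ)) :=
      tsum_nonneg (fun k => by split <;> positivity)
    have t3 : 0 ≤ (∑' k : ℤ, if n + 2 * k < 0 then
        ‖β (-k) * g k - β (k + n - 1) * g (k - 1)‖ ^ 2 else (0:ℝ)) :=
      tsum_nonneg (fun k => by split <;> positivity)
    have := hm2.le
    positivity

end
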